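/- arXiv:2203.10003 — 13 statements merged into one kernel-verified Lean document; each statement's English description precedes it below -/
import Mathlib

section
/- The simplicial complex Δ_{12,33} is flag: every subset S of V all of whose 2-element subsets are faces of Δ_{12,33} is itself a face of Δ_{12,33} (equivalently, Δ_{12,33} is the clique complex of its graph). -/
namespace Delta

abbrev V : Type := Fin 12

def x1 : V := 0
def x2 : V := 1
def x3 : V := 2
def y1 : V := 3
def y2 : V := 4
def y3 : V := 5
def z1 : V := 6
def z2 : V := 7
def z3 : V := 8
def v1 : V := 9
def v2 : V := 10
def v3 : V := 11

/-- The 33 facets of `Δ_{12,33}`, in the order they are listed. -/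
def facetList : List (Finset V) :=
  [{x1,y2,y3,z1}, {y2,y3,z1,v2}, {y1,y2,y3,v2}, {y1,y2,z3,v2}, {y2,z1,z3,v2},
   {x3,y2,z1,z3}, {x1,x3,y2,z1}, {x1,x3,z1,v3}, {x3,y1,y2,z3}, {z1,z2,z3,v2},
   {x3,y1,y2,v1}, {x2,x3,y1,v1}, {x3,z1,z3,v3}, {z1,z2,z3,v3}, {x1,z1,z2,v3},
   {x1,y3,z1,z2}, {y3,z1,z2,v2}, {y1,y3,z2,v2}, {x1,x3,y2,v1}, {x1,x2,x3,v1},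
   {x1,y2,y3,v1}, {x2,x3,y1,z3}, {x2,x3,z3,v3}, {y1,z2,z3,v2}, {x2,y1,z2,z3},
   {x2,y1,y3,z2}, {y1,y2,y3,v1}, {x2,y1,y3,v1}, {x1,x2,y3,v1}, {x1,x2,y3,z2},
   {x1,x2,x3,v3}, {x1,x2,z2,v3}, {x2,z2,z3,v3}]

/-- The facets of `Δ_{12,33}` as a finite set. -/
def facets : Finset (Finset V) := facetList.toFinset

/-- `F` is a face of `Δ_{12,33}` iff it is a subset of one of the 33 facets. -/
def IsFace (F : Finset V) : Prop := ∃ G ∈ facets, F ⊆ G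

instance : DecidablePred IsFace := fun F =>
  inferInstanceAs (Decidable (∃ G ∈ facets, F ⊆ G))

/-- Boolean version of the flag condition for a single set. -/
def goodB (S : Finset V) : Bool :=
  decide ((∀ a ∈ S, ∀ b ∈ S, a ≠ b → IsFace {a, b}) → IsFace S)

/-- Check `goodB` on all sets `acc ∪ T` for `T ⊆ vs`, with recursion depth `|vs|`. -/
def checkAll : List V → Finset V → Bool
  | [], acc => goodB acc
  | v :: vs, acc => checkAll vs acc && checkAll vs (insert v acc)

lemma checkAll_spec : ∀ (vs : List V) (acc : Finset V), checkAll vs acc = true →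
    ∀ S : Finset V, acc ⊆ S → S ⊆ acc ∪ vs.toFinset →
    ((∀ a ∈ S, ∀ b ∈ S, a ≠ b → IsFace {a, b}) → IsFace S) := by
  intro vs
  induction vs with
  | nil =>
    intro acc h S hsub hsup
    have hS : S = acc := by
      apply Finset.Subset.antisymm _ hsub
      simpa using hsup
    subst hS
    exact of_decide_eq_true h
  | cons v vs ih =>
    intro acc h S hsub hsup
    rw [checkAll, Bool.and_eq_true] at h
    by_cases hv : v ∈ S
    · refine ih (insert v acc) h.2 S (Finset.insert_subset hv hsub) ?_
      intro x hx
      have := hsup hx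
      simp only [List.toFinset_cons, Finset.mem_union, Finset.mem_insert] at this ⊢
      tauto
    · refine ih acc h.1 S hsub ?_
      intro x hx
      have hx' := hsup hx
      have hxv : x ≠ v := fun e => hv (e ▸ hx)
      simp only [List.toFinset_cons, Finset.mem_union, Finset.mem_insert] at hx' ⊢
      tauto

def allVerts : List V := [0, 1, 2, 3, 4, 5, 6, 7, 8, 9, 10, 11]

set_option maxHeartbeats 4000000 in
lemma checkAll_true : checkAll allVerts ∅ = true := by decide

/-- `Δ_{12,33}` is flag. -/
theorem delta_is_flag :
    ∀ S : Finset V,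
      (∀ a ∈ S, ∀ b ∈ S, a ≠ b → IsFace {a, b}) → IsFace S := by
  intro S h
  refine checkAll_spec allVerts ∅ checkAll_true S (Finset.empty_subset S) ?_ h
  intro x _
  simp only [Finset.empty_union]
  have : allVerts.toFinset = (Finset.univ : Finset V) := by decide
  rw [this]
  exact Finset.mem_univ x

end Delta
end

section
/- The f-vector of Δ_{12,33} is (1,12,45,66,33): Δ_{12,33} has exactly 12 one-element faces, exactly 45 two-element faces, exactly 66 three-element faces, exactly 33 four-element faces, no faces of cardinality greater than 4, and every face of Δ_{12,33} is contained in a four-element face (Δ_{12,33} is pure of dimension 3). -/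
namespace Delta

section FacetGenerated

variable {α : Type*} {𝓕 : Finset (Finset α)} {d : ℕ}

theorem filter_subset_facet_card_eq [DecidableEq α] [Fintype α] (k : ℕ) :
    (Finset.univ.powerset.filter fun F => (∃ G ∈ 𝓕, F ⊆ G) ∧ F.card = k) =
      𝓕.biUnion (Finset.powersetCard k) := by
  ext F
  simp [Finset.mem_powersetCard, ← and_assoc, exists_and_right]

theorem card_le_of_subset_facet (h𝓕 : ∀ G ∈ 𝓕, G.card = d) {F : Finset α}
    (hF : ∃ G ∈ 𝓕, F ⊆ G) : F.card ≤ d := by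
  obtain ⟨G, hG, hFG⟩ := hF
  exact h𝓕 G hG ▸ Finset.card_le_card hFG

theorem exists_card_eq_superset_of_subset_facet (h𝓕 : ∀ G ∈ 𝓕, G.card = d) {F : Finset α}
    (hF : ∃ G ∈ 𝓕, F ⊆ G) : ∃ G, (∃ H ∈ 𝓕, G ⊆ H) ∧ G.card = d ∧ F ⊆ G := by
  obtain ⟨G, hG, hFG⟩ := hF
  exact ⟨G, ⟨G, hG, subset_rfl⟩, h𝓕 G hG, hFG⟩

end FacetGenerated

theorem filter_isFace_card_eq (k : ℕ) :
    ((Finset.univ : Finset V).powerset.filter fun F => IsFace F ∧ F.card = k) =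
      facets.biUnion (Finset.powersetCard k) :=
  filter_subset_facet_card_eq k

theorem card_eq_four_of_mem_facets : ∀ G ∈ facets, G.card = 4 := by
  have hcard : facetList.map Finset.card = List.replicate 33 4 := by decide
  intro G hG
  exact List.eq_of_mem_replicate (hcard ▸ List.mem_map_of_mem (List.mem_toFinset.mp hG))

set_option maxRecDepth 40000 in
theorem card_biUnion_powersetCard_facets :
    (facets.biUnion (Finset.powersetCard 1)).card = 12 ∧
    (facets.biUnion (Finset.powersetCard 2)).card = 45 ∧
    (facets.biUnion (Finset.powersetCard 3)).card = 66 ∧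
    (facets.biUnion (Finset.powersetCard 4)).card = 33 := by
  refine ⟨?_, ?_, ?_, ?_⟩ <;> decide

/-- the f-vector of `Δ_{12,33}` is `(1,12,45,66,33)`, all faces have
cardinality at most 4, and every face is contained in a 4-element face. -/
theorem delta_f_vector :
    ((Finset.univ : Finset V).powerset.filter (fun F => IsFace F ∧ F.card = 1)).card = 12 ∧
    ((Finset.univ : Finset V).powerset.filter (fun F => IsFace F ∧ F.card = 2)).card = 45 ∧
    ((Finset.univ : Finset V).powerset.filter (fun F => IsFace F ∧ F.card = 3)).card = 66 ∧
    ((Finset.univ : Finset V).powerset.filter (fun F => IsFace F ∧ F.card = 4)).card = 33 ∧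
    (∀ F : Finset V, IsFace F → F.card ≤ 4) ∧
    (∀ F : Finset V, IsFace F → ∃ G : Finset V, IsFace G ∧ G.card = 4 ∧ F ⊆ G) := by
  obtain ⟨h₁, h₂, h₃, h₄⟩ := card_biUnion_powersetCard_facets
  simp only [filter_isFace_card_eq]
  exact ⟨h₁, h₂, h₃, h₄,
    fun _ => card_le_of_subset_facet card_eq_four_of_mem_facets,
    fun _ => exists_card_eq_superset_of_subset_facet card_eq_four_of_mem_facets⟩

end Delta
end

section
/- The ordering F_1, F_2, …, F_33 of the 33 facets of Δ_{12,33} in the order listed is a shelling order: for every j with 2 ≤ j ≤ 33, the collection of subsets of F_j that are contained in some F_i with i < j is nonempty, and every maximal element (with respect to inclusion) of this collection has exactly 3 elements. -/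
namespace Delta

/- STATEMENT 2: the listed order of the 33 facets is a shelling order.
Indices are 0-based here: `j` ranges over `1 ≤ j < 33`, corresponding to
`2 ≤ j+1 ≤ 33` in the 1-based statement.  For each such `j`, the collection of
subsets of `F_j` contained in some earlier facet is nonempty, and each of its
maximal elements (w.r.t. inclusion) has exactly 3 elements. -/

def bsub (S G : Finset V) : Prop := S.filter (fun a => a ∉ G) = ∅

instance : ∀ S G, Decidable (bsub S G) := fun _ _ => inferInstanceAs (Decidable (_ = _))

lemma bsub_iff (S G : Finset V) : bsub S G ↔ S ⊆ G := by
  simp [bsub, Finset.filter_eq_empty_iff, Finset.subset_iff]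

lemma step (j : ℕ) (R : Finset V)
    (hR : R.Nonempty) (hRF : bsub R (facetList.getD j ∅))
    (hcard : (facetList.getD j ∅).card = 4)
    (h : (facetList.getD j ∅).powerset.filter
      (fun T => ¬((∃ i < j, bsub T (facetList.getD i ∅)) ↔ ¬ bsub R T)) = ∅) :
    ((facetList.getD j ∅).powerset.filter
        (fun T => ∃ i < j, T ⊆ facetList.getD i ∅)).Nonempty ∧
    (∀ T ∈ (facetList.getD j ∅).powerset.filter
        (fun T => ∃ i < j, T ⊆ facetList.getD i ∅),
      (∀ T' ∈ (facetList.getD j ∅).powerset.filter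
          (fun T => ∃ i < j, T ⊆ facetList.getD i ∅), T ⊆ T' → T = T') →
      T.card = 3) := by
  rw [bsub_iff] at hRF
  have key : ∀ T ⊆ facetList.getD j ∅,
      ((∃ i < j, T ⊆ facetList.getD i ∅) ↔ ¬ R ⊆ T) := by
    intro T hT
    have := Finset.filter_eq_empty_iff.mp h (Finset.mem_powerset.mpr hT)
    rw [not_not] at this
    simpa only [bsub_iff] using this
  constructor
  · refine ⟨∅, Finset.mem_filter.mpr ⟨Finset.mem_powerset.mpr (Finset.empty_subset _), ?_⟩⟩
    refine (key ∅ (Finset.empty_subset _)).mpr fun hsub => ?_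
    exact Finset.not_nonempty_empty (Finset.subset_empty.mp hsub ▸ hR)
  · intro T hT hmax
    obtain ⟨hT1, hT2⟩ := Finset.mem_filter.mp hT
    rw [Finset.mem_powerset] at hT1
    obtain ⟨r, hrR, hrT⟩ := Finset.not_subset.mp ((key T hT1).mp hT2)
    have hTsub : T ⊆ (facetList.getD j ∅).erase r :=
      Finset.subset_erase.mpr ⟨hT1, hrT⟩
    have hmem : (facetList.getD j ∅).erase r ∈
        (facetList.getD j ∅).powerset.filter
          (fun T => ∃ i < j, T ⊆ facetList.getD i ∅) := by
      refine Finset.mem_filter.mpr ⟨Finset.mem_powerset.mpr (Finset.erase_subset _ _), ?_⟩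
      refine (key _ (Finset.erase_subset _ _)).mpr fun hsub => ?_
      exact Finset.notMem_erase r _ (hsub hrR)
    have := hmax _ hmem hTsub
    rw [this, Finset.card_erase_of_mem (hRF hrR), hcard]

set_option maxRecDepth 8000 in
/-- the listed order of the 33 facets is a shelling order.
Indices are 0-based here: `j` ranges over `1 ≤ j < 33`, corresponding to
`2 ≤ j+1 ≤ 33` in the 1-based statement.  For each such `j`, the collection of
subsets of `F_j` contained in some earlier facet is nonempty, and each of its
maximal elements (w.r.t. inclusion) has exactly 3 elements. -/
theorem delta_shelling_order :
    ∀ j : ℕ, 1 ≤ j → j < 33 →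
      ((facetList.getD j ∅).powerset.filter
          (fun T => ∃ i < j, T ⊆ facetList.getD i ∅)).Nonempty ∧
      (∀ T ∈ (facetList.getD j ∅).powerset.filter
          (fun T => ∃ i < j, T ⊆ facetList.getD i ∅),
        (∀ T' ∈ (facetList.getD j ∅).powerset.filter
            (fun T => ∃ i < j, T ⊆ facetList.getD i ∅), T ⊆ T' → T = T') →
        T.card = 3) := by
  intro j h1 h2
  interval_cases j
  · exact step 1 {v2} (by decide) (by decide) (by decide) (by decide)
  · exact step 2 {y1} (by decide) (by decide) (by decide) (by decide)
  · exact step 3 {z3} (by decide) (by decide) (by decide) (by decide)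
  · exact step 4 {z1,z3} (by decide) (by decide) (by decide) (by decide)
  · exact step 5 {x3} (by decide) (by decide) (by decide) (by decide)
  · exact step 6 {x1,x3} (by decide) (by decide) (by decide) (by decide)
  · exact step 7 {v3} (by decide) (by decide) (by decide) (by decide)
  · exact step 8 {x3,y1} (by decide) (by decide) (by decide) (by decide)
  · exact step 9 {z2} (by decide) (by decide) (by decide) (by decide)
  · exact step 10 {v1} (by decide) (by decide) (by decide) (by decide)
  · exact step 11 {x2} (by decide) (by decide) (by decide) (by decide)
  · exact step 12 {v3,z3} (by decide) (by decide) (by decide) (by decide)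
  · exact step 13 {v3,z2} (by decide) (by decide) (by decide) (by decide)
  · exact step 14 {x1,z2} (by decide) (by decide) (by decide) (by decide)
  · exact step 15 {y3,z2} (by decide) (by decide) (by decide) (by decide)
  · exact step 16 {v2,y3,z2} (by decide) (by decide) (by decide) (by decide)
  · exact step 17 {y1,z2} (by decide) (by decide) (by decide) (by decide)
  · exact step 18 {v1,x1} (by decide) (by decide) (by decide) (by decide)
  · exact step 19 {x1,x2} (by decide) (by decide) (by decide) (by decide)
  · exact step 20 {v1,y3} (by decide) (by decide) (by decide) (by decide)
  · exact step 21 {x2,z3} (by decide) (by decide) (by decide) (by decide)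
  · exact step 22 {v3,x2} (by decide) (by decide) (by decide) (by decide)
  · exact step 23 {y1,z2,z3} (by decide) (by decide) (by decide) (by decide)
  · exact step 24 {x2,z2} (by decide) (by decide) (by decide) (by decide)
  · exact step 25 {x2,y3} (by decide) (by decide) (by decide) (by decide)
  · exact step 26 {v1,y1,y3} (by decide) (by decide) (by decide) (by decide)
  · exact step 27 {v1,x2,y3} (by decide) (by decide) (by decide) (by decide)
  · exact step 28 {x1,x2,y3} (by decide) (by decide) (by decide) (by decide)
  · exact step 29 {x1,x2,z2} (by decide) (by decide) (by decide) (by decide)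
  · exact step 30 {v3,x1,x2} (by decide) (by decide) (by decide) (by decide)
  · exact step 31 {v3,x2,z2} (by decide) (by decide) (by decide) (by decide)
  · exact step 32 {v3,x2,z2,z3} (by decide) (by decide) (by decide) (by decide)

end Delta
end

section
/- Δ_{12,33} is not a suspension: there do not exist distinct vertices v, w ∈ V with {v,w} not a face of Δ_{12,33} such that Δ_{12,33} = {F ∪ G : F ∈ {∅,{v},{w}}, G a face of Δ_{12,33} with G ⊆ V∖{v,w}}. -/
/-!
Every facet of `Δ_{12,33}` has four vertices, and the facets `{y1,y2,y3,v2}`, `{z1,z2,z3,v3}`,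
`{x1,x2,x3,v1}` are pairwise disjoint, so any two vertices `v, w` both miss one of them, say `H`.
If `Δ_{12,33}` were the suspension over `v, w`, the cone `H ∪ {v}` would be a face with five vertices.
-/

namespace Delta

theorem IsFace.card_le_four {F : Finset V} (hF : IsFace F) : F.card ≤ 4 := by
  obtain ⟨G, hG, hFG⟩ := hF
  exact card_eq_four_of_mem_facets G hG ▸ Finset.card_le_card hFG

theorem notMem_pair_of_pairwise_disjoint {α : Type*} {A B C : Finset α}
    (hAB : Disjoint A B) (hAC : Disjoint A C) (hBC : Disjoint B C) (v w : α) :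
    (v ∉ A ∧ w ∉ A) ∨ (v ∉ B ∧ w ∉ B) ∨ (v ∉ C ∧ w ∉ C) := by
  rw [Finset.disjoint_left] at hAB hAC hBC
  have := @hAB v; have := @hAB w; have := @hAC v; have := @hAC w
  have := @hBC v; have := @hBC w
  tauto

theorem exists_facet_notMem_pair (v w : V) : ∃ H ∈ facets, v ∉ H ∧ w ∉ H := by
  have hA : {y1, y2, y3, v2} ∈ facets := by decide
  have hB : {z1, z2, z3, v3} ∈ facets := by decide
  have hC : {x1, x2, x3, v1} ∈ facets := by decide
  rcases notMem_pair_of_pairwise_disjoint (v := v) (w := w)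
    (by decide : Disjoint {y1, y2, y3, v2} {z1, z2, z3, v3})
    (by decide : Disjoint {y1, y2, y3, v2} {x1, x2, x3, v1})
    (by decide : Disjoint {z1, z2, z3, v3} {x1, x2, x3, v1}) with h | h | h
  exacts [⟨_, hA, h⟩, ⟨_, hB, h⟩, ⟨_, hC, h⟩]

/-- `Δ_{12,33}` is not a suspension: there are no distinct
non-adjacent vertices `v, w` such that every face of `Δ_{12,33}` is exactly
a union `A ∪ G` with `A ∈ {∅, {v}, {w}}` and `G` a face avoiding `v` and `w`. -/
theorem delta_not_suspension :
    ¬ ∃ v w : V, v ≠ w ∧ ¬ IsFace {v, w} ∧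
      (∀ F : Finset V, IsFace F ↔
        ∃ A ∈ ({∅, {v}, {w}} : Set (Finset V)),
          ∃ G : Finset V, IsFace G ∧ v ∉ G ∧ w ∉ G ∧ F = A ∪ G) := by
  rintro ⟨v, w, -, -, hsusp⟩
  obtain ⟨H, hH, hv, hw⟩ := exists_facet_notMem_pair v w
  have hcone : IsFace (insert v H) :=
    (hsusp _).2 ⟨{v}, by simp, H, ⟨H, hH, subset_rfl⟩, hv, hw, Finset.insert_eq v H⟩
  have := hcone.card_le_four
  rw [Finset.card_insert_of_notMem hv, card_eq_four_of_mem_facets H hH] at this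
  omega

end Delta
end

section
/- Δ_{12,33} has no contractible edge: for every 2-element face {a,b} of Δ_{12,33} there exist vertices c, d ∈ V such that a, b, c, d form an induced 4-cycle in the graph of Δ_{12,33}, i.e., {a,b}, {b,c}, {c,d}, {d,a} are faces of Δ_{12,33} while {a,c} and {b,d} are not. -/
namespace Delta

/-- `a, b, c, d` form an induced 4-cycle (in this cyclic order) in the graph of
`Δ_{12,33}`: consecutive pairs are edges, diagonals are non-edges. -/
def Induced4Cycle (a b c d : V) : Prop :=
  a ≠ b ∧ b ≠ c ∧ c ≠ d ∧ d ≠ a ∧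
  IsFace {a, b} ∧ IsFace {b, c} ∧ IsFace {c, d} ∧ IsFace {d, a} ∧
  ¬ IsFace {a, c} ∧ ¬ IsFace {b, d}

instance (a b c d : V) : Decidable (Induced4Cycle a b c d) := by
  unfold Induced4Cycle; infer_instance

set_option maxHeartbeats 4000000 in
/-- `Δ_{12,33}` has no contractible edge: every edge lies in an
induced 4-cycle of the graph of `Δ_{12,33}`. -/
theorem delta_no_contractible_edge :
    ∀ a b : V, a ≠ b → IsFace {a, b} → ∃ c d : V, Induced4Cycle a b c d := by
  decide

end Delta
end

section
/- The permutation τ of V defined by τ(x3)=y2, τ(y2)=z1, τ(z1)=x1, τ(x1)=y3, τ(y3)=z2, τ(z2)=x2, τ(x2)=y1, τ(y1)=z3, τ(z3)=x3, τ(v2)=v3, τ(v3)=v1, τ(v1)=v2 is an automorphism of Δ_{12,33}: a subset F ⊆ V is a face of Δ_{12,33} if and only if τ(F) is a face of Δ_{12,33}. -/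
set_option maxHeartbeats 2000000
set_option maxRecDepth 8000

namespace Delta

/-- The permutation `τ = (x3 y2 z1 x1 y3 z2 x2 y1 z3)(v1 v2 v3)`. -/
def tau : V → V := fun u =>
  if u = x3 then y2 else if u = y2 then z1 else if u = z1 then x1
  else if u = x1 then y3 else if u = y3 then z2 else if u = z2 then x2
  else if u = x2 then y1 else if u = y1 then z3 else if u = z3 then x3
  else if u = v2 then v3 else if u = v3 then v1 else v2

def tauInv : V → V := fun u =>
  if u = y2 then x3 else if u = z1 then y2 else if u = x1 then z1
  else if u = y3 then x1 else if u = z2 then y3 else if u = x2 then z2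
  else if u = y1 then x2 else if u = z3 then y1 else if u = x3 then z3
  else if u = v3 then v2 else if u = v1 then v3 else v1

lemma tauInv_tau : ∀ u : V, tauInv (tau u) = u := by decide

lemma image_facet : ∀ G ∈ facets, G.image tau ∈ facets := by
  intro G hG
  fin_cases hG <;> decide

lemma image_facet_inv : ∀ G ∈ facets, G.image tauInv ∈ facets := by
  intro G hG
  fin_cases hG <;> decide

/-- `τ` is an automorphism of `Δ_{12,33}`. -/
theorem tau_is_automorphism :
    ∀ F : Finset V, IsFace F ↔ IsFace (F.image tau) := by
  intro F
  constructor
  · rintro ⟨G, hG, hsub⟩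
    exact ⟨G.image tau, image_facet G hG, Finset.image_subset_image hsub⟩
  · rintro ⟨G, hG, hsub⟩
    refine ⟨G.image tauInv, image_facet_inv G hG, fun a ha => ?_⟩
    have h1 : tau a ∈ G := hsub (Finset.mem_image_of_mem tau ha)
    have h2 := Finset.mem_image_of_mem tauInv h1
    rwa [tauInv_tau] at h2

end Delta
end

section
/- The links of v1, v2, v3 in Δ_{12,33} are boundary complexes of octahedra: lk_{Δ}(v1) = {F ∪ G ∪ H : F ∈ {∅,{x1},{y1}}, G ∈ {∅,{x2},{y2}}, H ∈ {∅,{x3},{y3}}}, lk_{Δ}(v2) = {F ∪ G ∪ H : F ∈ {∅,{y1},{z1}}, G ∈ {∅,{y2},{z2}}, H ∈ {∅,{y3},{z3}}}, and lk_{Δ}(v3) = {F ∪ G ∪ H : F ∈ {∅,{x1},{z3}}, G ∈ {∅,{x2},{z1}}, H ∈ {∅,{x3},{z2}}}, where Δ = Δ_{12,33}. Moreover each of these links equals the induced subcomplex of Δ_{12,33} on its vertex set. -/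
namespace Delta

/-- `F` is a face of the link of the vertex `u` in `Δ_{12,33}`. -/
def InLink (u : V) (F : Finset V) : Prop := u ∉ F ∧ IsFace (insert u F)

instance (u : V) : DecidablePred (InLink u) := fun F =>
  inferInstanceAs (Decidable (u ∉ F ∧ IsFace (insert u F)))

lemma link_subset {u : V} {S : Finset V}
    (h : ∀ G ∈ facets, u ∈ G → G ⊆ insert u S) {F : Finset V}
    (hF : InLink u F) : F ⊆ S := by
  obtain ⟨hu, G, hG, hsub⟩ := hF
  intro a ha
  have h1 : a ∈ insert u S :=
    h G hG (hsub (Finset.mem_insert_self u F)) (hsub (Finset.mem_insert_of_mem ha))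
  rcases Finset.mem_insert.mp h1 with rfl | h2
  · exact absurd ha hu
  · exact h2

lemma hs1 : ∀ G ∈ facets, v1 ∈ G → G ⊆ insert v1 {x1, y1, x2, y2, x3, y3} := by
  intro G hG
  simp only [facets, List.mem_toFinset, facetList] at hG
  fin_cases hG <;> decide

lemma hs2 : ∀ G ∈ facets, v2 ∈ G → G ⊆ insert v2 {y1, z1, y2, z2, y3, z3} := by
  intro G hG
  simp only [facets, List.mem_toFinset, facetList] at hG
  fin_cases hG <;> decide

lemma hs3 : ∀ G ∈ facets, v3 ∈ G → G ⊆ insert v3 {x1, z3, x2, z1, x3, z2} := by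
  intro G hG
  simp only [facets, List.mem_toFinset, facetList] at hG
  fin_cases hG <;> decide

lemma k1 : ∀ F ∈ ({x1, y1, x2, y2, x3, y3} : Finset V).powerset,
    (InLink v1 F ↔ ∃ A ∈ ({∅, {x1}, {y1}} : Finset (Finset V)),
      ∃ B ∈ ({∅, {x2}, {y2}} : Finset (Finset V)),
        ∃ C ∈ ({∅, {x3}, {y3}} : Finset (Finset V)), F = A ∪ B ∪ C) := by
  intro F hF
  fin_cases hF <;> decide

lemma k2 : ∀ F ∈ ({y1, z1, y2, z2, y3, z3} : Finset V).powerset,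
    (InLink v2 F ↔ ∃ A ∈ ({∅, {y1}, {z1}} : Finset (Finset V)),
      ∃ B ∈ ({∅, {y2}, {z2}} : Finset (Finset V)),
        ∃ C ∈ ({∅, {y3}, {z3}} : Finset (Finset V)), F = A ∪ B ∪ C) := by
  intro F hF
  fin_cases hF <;> decide

lemma k3 : ∀ F ∈ ({x1, z3, x2, z1, x3, z2} : Finset V).powerset,
    (InLink v3 F ↔ ∃ A ∈ ({∅, {x1}, {z3}} : Finset (Finset V)),
      ∃ B ∈ ({∅, {x2}, {z1}} : Finset (Finset V)),
        ∃ C ∈ ({∅, {x3}, {z2}} : Finset (Finset V)), F = A ∪ B ∪ C) := by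
  intro F hF
  fin_cases hF <;> decide

lemma k4 : ∀ F ∈ ({x1, y1, x2, y2, x3, y3} : Finset V).powerset,
    (InLink v1 F ↔ (IsFace F ∧ F ⊆ {x1, y1, x2, y2, x3, y3})) := by
  intro F hF
  fin_cases hF <;> decide

lemma k5 : ∀ F ∈ ({y1, z1, y2, z2, y3, z3} : Finset V).powerset,
    (InLink v2 F ↔ (IsFace F ∧ F ⊆ {y1, z1, y2, z2, y3, z3})) := by
  intro F hF
  fin_cases hF <;> decide

lemma k6 : ∀ F ∈ ({x1, z3, x2, z1, x3, z2} : Finset V).powerset,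
    (InLink v3 F ↔ (IsFace F ∧ F ⊆ {x1, z3, x2, z1, x3, z2})) := by
  intro F hF
  fin_cases hF <;> decide

/-- the links of `v1, v2, v3` in `Δ_{12,33}` are boundary complexes
of octahedra (joins of three pairs of points), and each equals the induced
subcomplex of `Δ_{12,33}` on its vertex set. -/
theorem links_of_v_are_octahedra :
    (∀ F : Finset V, InLink v1 F ↔
      ∃ A ∈ ({∅, {x1}, {y1}} : Set (Finset V)),
        ∃ B ∈ ({∅, {x2}, {y2}} : Set (Finset V)),
          ∃ C ∈ ({∅, {x3}, {y3}} : Set (Finset V)), F = A ∪ B ∪ C) ∧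
    (∀ F : Finset V, InLink v2 F ↔
      ∃ A ∈ ({∅, {y1}, {z1}} : Set (Finset V)),
        ∃ B ∈ ({∅, {y2}, {z2}} : Set (Finset V)),
          ∃ C ∈ ({∅, {y3}, {z3}} : Set (Finset V)), F = A ∪ B ∪ C) ∧
    (∀ F : Finset V, InLink v3 F ↔
      ∃ A ∈ ({∅, {x1}, {z3}} : Set (Finset V)),
        ∃ B ∈ ({∅, {x2}, {z1}} : Set (Finset V)),
          ∃ C ∈ ({∅, {x3}, {z2}} : Set (Finset V)), F = A ∪ B ∪ C) ∧
    (∀ F : Finset V, InLink v1 F ↔ (IsFace F ∧ F ⊆ {x1, y1, x2, y2, x3, y3})) ∧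
    (∀ F : Finset V, InLink v2 F ↔ (IsFace F ∧ F ⊆ {y1, z1, y2, z2, y3, z3})) ∧
    (∀ F : Finset V, InLink v3 F ↔ (IsFace F ∧ F ⊆ {x1, z3, x2, z1, x3, z2})) := by
  refine ⟨?_, ?_, ?_, ?_, ?_, ?_⟩ <;> intro F
  · simp only [Set.mem_insert_iff, Set.mem_singleton_iff]
    by_cases hF : F ⊆ {x1, y1, x2, y2, x3, y3}
    · simpa using k1 F (Finset.mem_powerset.mpr hF)
    · constructor
      · intro h; exact absurd (link_subset hs1 h) hF
      · rintro ⟨A, hA, B, hB, C, hC, rfl⟩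
        refine absurd (Finset.union_subset (Finset.union_subset ?_ ?_) ?_) hF <;>
          [rcases hA with rfl | rfl | rfl; rcases hB with rfl | rfl | rfl;
           rcases hC with rfl | rfl | rfl] <;> decide
  · simp only [Set.mem_insert_iff, Set.mem_singleton_iff]
    by_cases hF : F ⊆ {y1, z1, y2, z2, y3, z3}
    · simpa using k2 F (Finset.mem_powerset.mpr hF)
    · constructor
      · intro h; exact absurd (link_subset hs2 h) hF
      · rintro ⟨A, hA, B, hB, C, hC, rfl⟩
        refine absurd (Finset.union_subset (Finset.union_subset ?_ ?_) ?_) hF <;>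
          [rcases hA with rfl | rfl | rfl; rcases hB with rfl | rfl | rfl;
           rcases hC with rfl | rfl | rfl] <;> decide
  · simp only [Set.mem_insert_iff, Set.mem_singleton_iff]
    by_cases hF : F ⊆ {x1, z3, x2, z1, x3, z2}
    · simpa using k3 F (Finset.mem_powerset.mpr hF)
    · constructor
      · intro h; exact absurd (link_subset hs3 h) hF
      · rintro ⟨A, hA, B, hB, C, hC, rfl⟩
        refine absurd (Finset.union_subset (Finset.union_subset ?_ ?_) ?_) hF <;>
          [rcases hA with rfl | rfl | rfl; rcases hB with rfl | rfl | rfl;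
           rcases hC with rfl | rfl | rfl] <;> decide
  · by_cases hF : F ⊆ {x1, y1, x2, y2, x3, y3}
    · exact k4 F (Finset.mem_powerset.mpr hF)
    · exact ⟨fun h => absurd (link_subset hs1 h) hF, fun h => absurd h.2 hF⟩
  · by_cases hF : F ⊆ {y1, z1, y2, z2, y3, z3}
    · exact k5 F (Finset.mem_powerset.mpr hF)
    · exact ⟨fun h => absurd (link_subset hs2 h) hF, fun h => absurd h.2 hF⟩
  · by_cases hF : F ⊆ {x1, z3, x2, z1, x3, z2}
    · exact k6 F (Finset.mem_powerset.mpr hF)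
    · exact ⟨fun h => absurd (link_subset hs3 h) hF, fun h => absurd h.2 hF⟩

end Delta
end

section
/- Every induced cycle on at least 4 vertices in the graph of lk_{Δ_{12,33}}(x1) that avoids v1 and v3 has exactly 4 vertices and contains both x2 and x3. More precisely: if C ⊆ {x2,x3,y2,y3,z1,z2} has |C| ≥ 4 and the induced subgraph of the graph of Δ_{12,33} on C is a cycle (connected with every vertex in exactly two edges), then C is one of {x2,x3,y2,y3}, {x2,x3,y3,z1}, {x2,x3,z1,z2}. -/
namespace Delta

set_option maxRecDepth 10000 in
lemma aux : ∀ C ∈ ({x2, x3, y2, y3, z1, z2} : Finset V).powerset,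
    4 ≤ C.card → (∀ a ∈ C, (C.filter (fun b => b ≠ a ∧ IsFace {a, b})).card = 2) →
    (C = {x2, x3, y2, y3} ∨ C = {x2, x3, y3, z1} ∨ C = {x2, x3, z1, z2}) := by
  intro C hC
  fin_cases hC <;> decide

/-- every induced cycle on at least 4 vertices in the graph of
`lk_{Δ_{12,33}}(x1)` avoiding `v1` and `v3` (i.e. an induced cycle of the graph
of `Δ_{12,33}` on a subset of `{x2,x3,y2,y3,z1,z2}`) is one of the three listed
4-element sets (each of which contains `x2` and `x3`). -/
theorem induced_cycles_in_link_x1 :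
    ∀ C : Finset V, C ⊆ ({x2, x3, y2, y3, z1, z2} : Finset V) → 4 ≤ C.card →
      (∀ a ∈ C, (C.filter (fun b => b ≠ a ∧ IsFace {a, b})).card = 2) →
      (∀ a ∈ C, ∀ b ∈ C,
        Relation.ReflTransGen (fun u w => u ∈ C ∧ w ∈ C ∧ u ≠ w ∧ IsFace {u, w}) a b) →
      (C = {x2, x3, y2, y3} ∨ C = {x2, x3, y3, z1} ∨ C = {x2, x3, z1, z2}) := by
  intro C hsub hcard hdeg _
  exact aux C (Finset.mem_powerset.mpr hsub) hcard hdeg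

end Delta
end

section
/- Γ1 and Γ2 have the same boundary: a 3-element subset T of V is contained in exactly one facet of Γ1 if and only if T is contained in exactly one facet of Γ2, if and only if T is one of the following 18 triangles: {x1,x2,y3}, {x1,x3,y2}, {x2,x3,y1}, {x1,y2,y3}, {x2,y1,y3}, {x3,y1,y2}, {y1,y2,z3}, {y1,y3,z2}, {y2,y3,z1}, {y1,z2,z3}, {y2,z1,z3}, {y3,z1,z2}, {x1,x2,z2}, {x1,x3,z1}, {x2,x3,z3}, {x1,z1,z2}, {x2,z2,z3}, {x3,z1,z3}. -/
namespace Delta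

/-- The 24 facets of `Γ₁`: facets of `Δ_{12,33}` containing one of `v1, v2, v3`. -/
def gamma1Facets : Finset (Finset V) :=
  facets.filter (fun G => v1 ∈ G ∨ v2 ∈ G ∨ v3 ∈ G)

/-- The 9 facets of `Γ₂`: facets of `Δ_{12,33}` containing none of `v1, v2, v3`. -/
def gamma2Facets : Finset (Finset V) :=
  facets.filter (fun G => ¬ (v1 ∈ G ∨ v2 ∈ G ∨ v3 ∈ G))

/-- `F` is a face of `Γ₁`. -/
def FaceG1 (F : Finset V) : Prop := ∃ G ∈ gamma1Facets, F ⊆ G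

/-- `F` is a face of `Γ₂`. -/
def FaceG2 (F : Finset V) : Prop := ∃ G ∈ gamma2Facets, F ⊆ G

/-- The 18 triangles of the common boundary torus `∂Γ₁ = ∂Γ₂`. -/
def boundaryTriangles : Finset (Finset V) :=
  {{x1,x2,y3}, {x1,x3,y2}, {x2,x3,y1}, {x1,y2,y3}, {x2,y1,y3}, {x3,y1,y2},
   {y1,y2,z3}, {y1,y3,z2}, {y2,y3,z1}, {y1,z2,z3}, {y2,z1,z3}, {y3,z1,z2},
   {x1,x2,z2}, {x1,x3,z1}, {x2,x3,z3}, {x1,z1,z2}, {x2,z2,z3}, {x3,z1,z3}}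


def g1List : List (Finset V) := facetList.filter (fun G => decide (v1 ∈ G ∨ v2 ∈ G ∨ v3 ∈ G))
def g2List : List (Finset V) := facetList.filter (fun G => ! decide (v1 ∈ G ∨ v2 ∈ G ∨ v3 ∈ G))
def bList : List (Finset V) :=
  [{x1,x2,y3}, {x1,x3,y2}, {x2,x3,y1}, {x1,y2,y3}, {x2,y1,y3}, {x3,y1,y2},
   {y1,y2,z3}, {y1,y3,z2}, {y2,y3,z1}, {y1,z2,z3}, {y2,z1,z3}, {y3,z1,z2},
   {x1,x2,z2}, {x1,x3,z1}, {x2,x3,z3}, {x1,z1,z2}, {x2,z2,z3}, {x3,z1,z3}]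

lemma g1_eq : gamma1Facets = g1List.toFinset := by decide
lemma g2_eq : gamma2Facets = g2List.toFinset := by decide
lemma g1_nodup : g1List.Nodup := by decide
lemma g2_nodup : g2List.Nodup := by decide
lemma b_eq : boundaryTriangles = bList.toFinset := by decide

lemma card_filter_eq_countP (l : List (Finset V)) (hl : l.Nodup) (T : Finset V) :
    (l.toFinset.filter (fun G => T ⊆ G)).card = l.countP (fun G => decide (T ⊆ G)) := by
  have h1 : (l.toFinset.filter (fun G => T ⊆ G)) =
      (l.filter (fun G => decide (T ⊆ G))).toFinset := by
    rw [List.toFinset_filter]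
    exact Finset.filter_congr (fun x _ => by simp)
  rw [h1, List.toFinset_card_of_nodup (hl.filter _), List.countP_eq_length_filter]

lemma mem_b_iff (T : Finset V) :
    T ∈ boundaryTriangles ↔ (bList.any (fun S => decide (T = S))) = true := by
  rw [b_eq, List.mem_toFinset, List.any_eq_true]
  simp

set_option maxRecDepth 100000 in
set_option maxHeartbeats 4000000 in
lemma aux_s12 : ∀ a b c : V, a < b → b < c →
      (((g1List.countP (fun G => decide (({a,b,c} : Finset V) ⊆ G))) = 1 ↔
        (g2List.countP (fun G => decide (({a,b,c} : Finset V) ⊆ G))) = 1) ∧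
       ((g1List.countP (fun G => decide (({a,b,c} : Finset V) ⊆ G))) = 1 ↔
         (bList.any (fun S => decide (({a,b,c} : Finset V) = S))) = true)) := by
  decide

lemma sorted3 (a b c : V) (hab : a ≠ b) (hac : a ≠ c) (hbc : b ≠ c) :
    ∃ a' b' c', a' < b' ∧ b' < c' ∧ ({a,b,c} : Finset V) = {a',b',c'} := by
  rcases hab.lt_or_gt with h1 | h1 <;> rcases hac.lt_or_gt with h2 | h2 <;>
    rcases hbc.lt_or_gt with h3 | h3
  · exact ⟨a, b, c, h1, h3, rfl⟩
  · exact ⟨a, c, b, h2, h3, by ext x; simp [Finset.mem_insert]; tauto⟩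
  · exact absurd (h2.trans h1) (lt_asymm h3)
  · exact ⟨c, a, b, h2, h1, by ext x; simp [Finset.mem_insert]; tauto⟩
  · exact ⟨b, a, c, h1, h2, by ext x; simp [Finset.mem_insert]; tauto⟩
  · exact absurd (h2.trans h3) (lt_asymm h1)
  · exact ⟨b, c, a, h3, h2, by ext x; simp [Finset.mem_insert]; tauto⟩
  · exact ⟨c, b, a, h3, h1, by ext x; simp [Finset.mem_insert]; tauto⟩

/-- a 3-element subset of `V` is contained in exactly one facet of
`Γ₁` iff it is contained in exactly one facet of `Γ₂`, iff it is one of the 18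
listed boundary triangles. -/
theorem gamma_boundaries_agree :
    ∀ T : Finset V, T.card = 3 →
      (((gamma1Facets.filter (fun G => T ⊆ G)).card = 1 ↔
        (gamma2Facets.filter (fun G => T ⊆ G)).card = 1) ∧
       ((gamma1Facets.filter (fun G => T ⊆ G)).card = 1 ↔ T ∈ boundaryTriangles)) := by
  intro T hT
  obtain ⟨a, b, c, hab, hac, hbc, rfl⟩ := Finset.card_eq_three.mp hT
  obtain ⟨a', b', c', h1, h2, hset⟩ := sorted3 a b c hab hac hbc
  rw [hset, g1_eq, g2_eq, card_filter_eq_countP _ g1_nodup,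
    card_filter_eq_countP _ g2_nodup, mem_b_iff]
  exact aux_s12 a' b' c' h1 h2

end Delta
end

section
/- Each of the following nine quadruples of vertices forms an induced 4-cycle in the graph of Δ_{12,33}, in the cyclic order listed (consecutive pairs are edges, the two diagonal pairs are non-edges): (v1,x1,z2,y1), (v1,x2,z3,y2), (v1,x3,z1,y3), (v2,y1,x3,z1), (v2,y2,x1,z2), (v2,y3,x2,z3), (v3,x1,y2,z3), (v3,x2,y3,z1), (v3,x3,y1,z2). -/
namespace Delta

set_option synthInstance.maxHeartbeats 1000000 in
set_option synthInstance.maxSize 1000 in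
set_option maxHeartbeats 2000000 in
/-- each of the nine listed quadruples of vertices forms an
induced 4-cycle in the graph of `Δ_{12,33}`, in the cyclic order listed. -/
theorem nine_induced_four_cycles :
    Induced4Cycle v1 x1 z2 y1 ∧ Induced4Cycle v1 x2 z3 y2 ∧ Induced4Cycle v1 x3 z1 y3 ∧
    Induced4Cycle v2 y1 x3 z1 ∧ Induced4Cycle v2 y2 x1 z2 ∧ Induced4Cycle v2 y3 x2 z3 ∧
    Induced4Cycle v3 x1 y2 z3 ∧ Induced4Cycle v3 x2 y3 z1 ∧ Induced4Cycle v3 x3 y1 z2 := by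
  unfold Induced4Cycle IsFace
  decide

end Delta
end

section
/- A join is a suspension if and only if one of its factors is: if Φ1 and Φ2 are abstract simplicial complexes on disjoint nonempty finite vertex sets V1 and V2 (each containing all singletons of its vertex set), then the join Φ1 * Φ2 is a suspension if and only if Φ1 is a suspension or Φ2 is a suspension. -/
namespace JoinComplex

variable {α : Type*} [DecidableEq α]

/-- `Φ` is an abstract simplicial complex on the finite vertex set `V`:
a collection of subsets of `V` closed under taking subsets and containing
every singleton. -/
def IsComplex (V : Finset α) (Φ : Set (Finset α)) : Prop :=
  (∀ F ∈ Φ, F ⊆ V) ∧ (∀ F ∈ Φ, ∀ G : Finset α, G ⊆ F → G ∈ Φ) ∧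
  (∀ u ∈ V, ({u} : Finset α) ∈ Φ)

/-- A complex on `V` is flag if every set of vertices pairwise joined by
2-element faces is itself a face. -/
def IsFlag (V : Finset α) (Φ : Set (Finset α)) : Prop :=
  ∀ S : Finset α, S ⊆ V →
    (∀ a ∈ S, ∀ b ∈ S, a ≠ b → ({a, b} : Finset α) ∈ Φ) → S ∈ Φ

/-- The join of two simplicial complexes (on disjoint vertex sets). -/
def join (Φ1 Φ2 : Set (Finset α)) : Set (Finset α) :=
  {H | ∃ F ∈ Φ1, ∃ G ∈ Φ2, H = F ∪ G}

/-- A complex `Φ` on vertex set `V` is a suspension if there are distinct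
vertices `v, w` with `{v,w} ∉ Φ` such that
`Φ = {A ∪ G : A ∈ {∅,{v},{w}}, G ∈ Φ, G ⊆ V \ {v,w}}`. -/
def IsSuspension (V : Finset α) (Φ : Set (Finset α)) : Prop :=
  ∃ v ∈ V, ∃ w ∈ V, v ≠ w ∧ ({v, w} : Finset α) ∉ Φ ∧
    (∀ H : Finset α, H ∈ Φ ↔
      ∃ A ∈ ({∅, {v}, {w}} : Set (Finset α)),
        ∃ G ∈ Φ, G ⊆ V \ ({v, w} : Finset α) ∧ H = A ∪ G)

lemma join_comm' (Φ1 Φ2 : Set (Finset α)) : join Φ1 Φ2 = join Φ2 Φ1 := by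
  ext H
  constructor <;> rintro ⟨F, hF, G, hG, rfl⟩ <;>
    exact ⟨G, hG, F, hF, Finset.union_comm F G⟩

lemma empty_mem {V : Finset α} {Φ : Set (Finset α)} (h : IsComplex V Φ)
    (hne : V.Nonempty) : (∅ : Finset α) ∈ Φ := by
  obtain ⟨u, hu⟩ := hne
  exact h.2.1 _ (h.2.2 u hu) ∅ (Finset.empty_subset _)

lemma mem_left {V1 V2 : Finset α} {Φ1 Φ2 : Set (Finset α)}
    (hdisj : Disjoint V1 V2) (h2 : IsComplex V2 Φ2)
    {H : Finset α} (hH : H ∈ join Φ1 Φ2) (hsub : H ⊆ V1) : H ∈ Φ1 := by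
  obtain ⟨F, hF, G, hG, rfl⟩ := hH
  have hG0 : G = ∅ := by
    rw [Finset.eq_empty_iff_forall_notMem]
    intro x hx
    exact Finset.disjoint_left.1 hdisj (hsub (Finset.mem_union_right _ hx))
      (h2.1 G hG hx)
  subst hG0
  simpa using hF

lemma pair_subset_V1 {V1 : Finset α} {v w : α} (hv : v ∈ V1) (hw : w ∈ V1) :
    ({v, w} : Finset α) ⊆ V1 := by
  intro x hx
  rcases Finset.mem_insert.1 hx with rfl | hx
  · exact hv
  · exact (Finset.mem_singleton.1 hx) ▸ hw

lemma susp_join {V1 V2 : Finset α} {Φ1 Φ2 : Set (Finset α)}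
    (hdisj : Disjoint V1 V2)
    (h1 : IsComplex V1 Φ1) (h2 : IsComplex V2 Φ2)
    (hs : IsSuspension V1 Φ1) :
    IsSuspension (V1 ∪ V2) (join Φ1 Φ2) := by
  obtain ⟨v, hv, w, hw, hvw, hvwΦ, hiff⟩ := hs
  refine ⟨v, Finset.mem_union_left _ hv, w, Finset.mem_union_left _ hw, hvw, ?_, ?_⟩
  · rintro ⟨F, hF, G, hG, hEq⟩
    have hG0 : G = ∅ := by
      rw [Finset.eq_empty_iff_forall_notMem]
      intro x hx
      have hx1 : x ∈ ({v, w} : Finset α) := hEq ▸ Finset.mem_union_right _ hx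
      exact Finset.disjoint_left.1 hdisj (pair_subset_V1 hv hw hx1) (h2.1 G hG hx)
    subst hG0
    rw [Finset.union_empty] at hEq
    exact hvwΦ (hEq ▸ hF)
  · intro H
    constructor
    · rintro ⟨F, hF, G, hG, rfl⟩
      obtain ⟨A, hA, F', hF', hF'sub, rfl⟩ := (hiff F).1 hF
      refine ⟨A, hA, F' ∪ G, ⟨F', hF', G, hG, rfl⟩, ?_, by rw [Finset.union_assoc]⟩
      intro x hx
      rcases Finset.mem_union.1 hx with hx | hx
      · have := hF'sub hx
        rw [Finset.mem_sdiff] at this ⊢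
        exact ⟨Finset.mem_union_left _ this.1, this.2⟩
      · have hxV2 := h2.1 G hG hx
        rw [Finset.mem_sdiff]
        refine ⟨Finset.mem_union_right _ hxV2, fun hmem => ?_⟩
        exact Finset.disjoint_left.1 hdisj (pair_subset_V1 hv hw hmem) hxV2
    · rintro ⟨A, hA, G', ⟨F, hF, G, hG, rfl⟩, hsub, rfl⟩
      have hFsub : F ⊆ V1 \ ({v, w} : Finset α) := by
        intro x hx
        have h1x := h1.1 F hF hx
        have := hsub (Finset.mem_union_left _ hx)
        rw [Finset.mem_sdiff] at this ⊢
        exact ⟨h1x, this.2⟩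
      have hAF : A ∪ F ∈ Φ1 := (hiff (A ∪ F)).2 ⟨A, hA, F, hF, hFsub, rfl⟩
      exact ⟨A ∪ F, hAF, G, hG, by rw [Finset.union_assoc]⟩

lemma join_susp_aux {V1 V2 : Finset α} {Φ1 Φ2 : Set (Finset α)}
    (hne2 : V2.Nonempty) (hdisj : Disjoint V1 V2)
    (h1 : IsComplex V1 Φ1) (h2 : IsComplex V2 Φ2)
    {v w : α} (hv : v ∈ V1) (hw : w ∈ V1) (hvw : v ≠ w)
    (hvwΦ : ({v, w} : Finset α) ∉ join Φ1 Φ2)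
    (hiff : ∀ H : Finset α, H ∈ join Φ1 Φ2 ↔
      ∃ A ∈ ({∅, {v}, {w}} : Set (Finset α)),
        ∃ G ∈ join Φ1 Φ2, G ⊆ (V1 ∪ V2) \ ({v, w} : Finset α) ∧ H = A ∪ G) :
    IsSuspension V1 Φ1 := by
  have hemp2 : (∅ : Finset α) ∈ Φ2 := empty_mem h2 hne2
  have hAsub : ∀ A ∈ ({∅, {v}, {w}} : Set (Finset α)), A ⊆ V1 := by
    rintro A (rfl | rfl | rfl)
    · exact Finset.empty_subset _
    · exact Finset.singleton_subset_iff.2 hv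
    · exact Finset.singleton_subset_iff.2 hw
  refine ⟨v, hv, w, hw, hvw, ?_, ?_⟩
  · intro h
    exact hvwΦ ⟨_, h, ∅, hemp2, by simp⟩
  · intro H
    constructor
    · intro hH
      have hHj : H ∈ join Φ1 Φ2 := ⟨H, hH, ∅, hemp2, by simp⟩
      obtain ⟨A, hA, G', hG'j, hsub, rfl⟩ := (hiff _).1 hHj
      have hHV1 : A ∪ G' ⊆ V1 := h1.1 _ hH
      have hG'V1 : G' ⊆ V1 := (Finset.union_subset_iff.1 hHV1).2
      refine ⟨A, hA, G', mem_left hdisj h2 hG'j hG'V1, ?_, rfl⟩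
      intro x hx
      have := hsub hx
      rw [Finset.mem_sdiff] at this ⊢
      exact ⟨hG'V1 hx, this.2⟩
    · rintro ⟨A, hA, G, hG, hGsub, rfl⟩
      have hGj : G ∈ join Φ1 Φ2 := ⟨G, hG, ∅, hemp2, by simp⟩
      have hGsub' : G ⊆ (V1 ∪ V2) \ ({v, w} : Finset α) := by
        intro x hx
        have := hGsub hx
        rw [Finset.mem_sdiff] at this ⊢
        exact ⟨Finset.mem_union_left _ this.1, this.2⟩
      have hAGj : A ∪ G ∈ join Φ1 Φ2 := (hiff _).2 ⟨A, hA, G, hGj, hGsub', rfl⟩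
      have hAGV1 : A ∪ G ⊆ V1 :=
        Finset.union_subset (hAsub A hA)
          (fun x hx => (Finset.mem_sdiff.1 (hGsub hx)).1)
      exact mem_left hdisj h2 hAGj hAGV1

/-- a join of complexes on disjoint nonempty vertex sets is a
suspension if and only if one of its factors is a suspension. -/
theorem join_suspension_iff (V1 V2 : Finset α) (Φ1 Φ2 : Set (Finset α))
    (hne1 : V1.Nonempty) (hne2 : V2.Nonempty) (hdisj : Disjoint V1 V2)
    (h1 : IsComplex V1 Φ1) (h2 : IsComplex V2 Φ2) :
    IsSuspension (V1 ∪ V2) (join Φ1 Φ2) ↔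
      (IsSuspension V1 Φ1 ∨ IsSuspension V2 Φ2) := by
  constructor
  · rintro ⟨v, hv, w, hw, hvw, hvwj, hiff⟩
    have key : ∀ x y : α, x ∈ V1 → y ∈ V2 → ({x, y} : Finset α) ∈ join Φ1 Φ2 :=
      fun x y hx hy => ⟨{x}, h1.2.2 x hx, {y}, h2.2.2 y hy, by
        rw [Finset.insert_eq]⟩
    rcases Finset.mem_union.1 hv with hv1 | hv2 <;>
      rcases Finset.mem_union.1 hw with hw1 | hw2
    · exact Or.inl (join_susp_aux hne2 hdisj h1 h2 hv1 hw1 hvw hvwj hiff)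
    · exact absurd (key v w hv1 hw2) hvwj
    · refine absurd ?_ hvwj
      have := key w v hw1 hv2
      rwa [Finset.pair_comm] at this
    · rw [join_comm' Φ1 Φ2] at hvwj hiff
      rw [Finset.union_comm V1 V2] at hiff
      exact Or.inr (join_susp_aux hne1 hdisj.symm h2 h1 hv2 hw2 hvw hvwj hiff)
  · rintro (hs | hs)
    · exact susp_join hdisj h1 h2 hs
    · have := susp_join hdisj.symm h2 h1 hs
      rwa [join_comm' Φ2 Φ1, Finset.union_comm V2 V1] at this

end JoinComplex
end

section
/- The join of two flag complexes without contractible edges has no contractible edge: let Φ1 and Φ2 be flag abstract simplicial complexes on disjoint finite vertex sets V1 and V2 such that, for i = 1, 2, every vertex a ∈ V_i has at least one vertex b ∈ V_i with b ≠ a and {a,b} ∉ Φ_i, and every 2-element face of Φ_i is contained in an induced 4-cycle of the graph of Φ_i. Then every 2-element face of the join Φ1 * Φ2 is contained in an induced 4-cycle of the graph of Φ1 * Φ2. -/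
namespace JoinComplex

variable {α : Type*} [DecidableEq α]

/-- `a, b, c, d` form an induced 4-cycle (in this cyclic order) in the graph of
the complex `Φ`: consecutive pairs are edges (2-element faces) and the two
diagonal pairs are non-edges. -/
def Induced4Cycle (Φ : Set (Finset α)) (a b c d : α) : Prop :=
  a ≠ b ∧ b ≠ c ∧ c ≠ d ∧ d ≠ a ∧
  ({a, b} : Finset α) ∈ Φ ∧ ({b, c} : Finset α) ∈ Φ ∧
  ({c, d} : Finset α) ∈ Φ ∧ ({d, a} : Finset α) ∈ Φ ∧
  ({a, c} : Finset α) ∉ Φ ∧ ({b, d} : Finset α) ∉ Φ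

/-- if `Φ1` and `Φ2` are flag complexes on disjoint vertex sets in
which every vertex has a non-neighbour and every edge lies in an induced
4-cycle, then every edge of the join `Φ1 * Φ2` lies in an induced 4-cycle of
the graph of the join. -/
theorem join_no_contractible_edge (V1 V2 : Finset α) (Φ1 Φ2 : Set (Finset α))
    (hdisj : Disjoint V1 V2)
    (h1 : IsComplex V1 Φ1) (h2 : IsComplex V2 Φ2)
    (hf1 : IsFlag V1 Φ1) (hf2 : IsFlag V2 Φ2)
    (hnb1 : ∀ a ∈ V1, ∃ b ∈ V1, b ≠ a ∧ ({a, b} : Finset α) ∉ Φ1)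
    (hnb2 : ∀ a ∈ V2, ∃ b ∈ V2, b ≠ a ∧ ({a, b} : Finset α) ∉ Φ2)
    (hc1 : ∀ a b : α, a ≠ b → ({a, b} : Finset α) ∈ Φ1 →
      ∃ c d : α, Induced4Cycle Φ1 a b c d)
    (hc2 : ∀ a b : α, a ≠ b → ({a, b} : Finset α) ∈ Φ2 →
      ∃ c d : α, Induced4Cycle Φ2 a b c d) :
    ∀ a b : α, a ≠ b → ({a, b} : Finset α) ∈ join Φ1 Φ2 →
      ∃ c d : α, Induced4Cycle (join Φ1 Φ2) a b c d := by
  intro a b hab hmem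
  obtain ⟨F, hF, G, hG, hFG⟩ := hmem
  have hF1 := h1.1 F hF
  have hG2 := h2.1 G hG
  have hempty1 : (∅ : Finset α) ∈ Φ1 := h1.2.1 F hF ∅ (Finset.empty_subset F)
  have hempty2 : (∅ : Finset α) ∈ Φ2 := h2.2.1 G hG ∅ (Finset.empty_subset G)
  have key1 : ∀ x y : α, x ∉ V2 → y ∉ V2 →
      ({x, y} : Finset α) ∈ join Φ1 Φ2 → ({x, y} : Finset α) ∈ Φ1 := by
    rintro x y hx hy ⟨F', hF', G', hG', hEq⟩
    have hG'2 := h2.1 G' hG'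
    have hGe : G' = ∅ := by
      apply Finset.eq_empty_of_forall_notMem
      intro z hz
      have hzV : z ∈ V2 := hG'2 hz
      have hz2 : z ∈ ({x, y} : Finset α) := hEq ▸ Finset.mem_union_right F' hz
      rcases Finset.mem_insert.1 hz2 with rfl | hz2
      · exact hx hzV
      · exact hy (Finset.mem_singleton.1 hz2 ▸ hzV)
    rw [hGe, Finset.union_empty] at hEq
    rwa [hEq]
  have key2 : ∀ x y : α, x ∉ V1 → y ∉ V1 →
      ({x, y} : Finset α) ∈ join Φ1 Φ2 → ({x, y} : Finset α) ∈ Φ2 := by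
    rintro x y hx hy ⟨F', hF', G', hG', hEq⟩
    have hF'1 := h1.1 F' hF'
    have hFe : F' = ∅ := by
      apply Finset.eq_empty_of_forall_notMem
      intro z hz
      have hzV : z ∈ V1 := hF'1 hz
      have hz2 : z ∈ ({x, y} : Finset α) := hEq ▸ Finset.mem_union_left G' hz
      rcases Finset.mem_insert.1 hz2 with rfl | hz2
      · exact hx hzV
      · exact hy (Finset.mem_singleton.1 hz2 ▸ hzV)
    rw [hFe, Finset.empty_union] at hEq
    rwa [hEq]
  have inj1 : ∀ H ∈ Φ1, H ∈ join Φ1 Φ2 :=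
    fun H hH => ⟨H, hH, ∅, hempty2, (Finset.union_empty H).symm⟩
  have inj2 : ∀ H ∈ Φ2, H ∈ join Φ1 Φ2 :=
    fun H hH => ⟨∅, hempty1, H, hH, (Finset.empty_union H).symm⟩
  have mixed : ∀ x y : α, x ∈ V1 → y ∈ V2 → ({x, y} : Finset α) ∈ join Φ1 Φ2 :=
    fun x y hx hy => ⟨{x}, h1.2.2 x hx, {y}, h2.2.2 y hy, by
      ext z; simp⟩
  have habm : ({a, b} : Finset α) ∈ join Φ1 Φ2 := ⟨F, hF, G, hG, hFG⟩
  have hdl := Finset.disjoint_left.1 hdisj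
  have hloc : ∀ z : α, z ∈ ({a, b} : Finset α) → z ∈ V1 ∨ z ∈ V2 := by
    intro z hz
    rw [hFG] at hz
    rcases Finset.mem_union.1 hz with h | h
    · exact Or.inl (hF1 h)
    · exact Or.inr (hG2 h)
  have haloc := hloc a (Finset.mem_insert_self a _)
  have hbloc := hloc b (Finset.mem_insert_of_mem (Finset.mem_singleton_self b))
  rcases haloc with ha1 | ha2 <;> rcases hbloc with hb1 | hb2
  · -- both in V1
    have hedge : ({a, b} : Finset α) ∈ Φ1 :=
      key1 a b (hdl ha1) (hdl hb1) habm
    obtain ⟨c, d, hc⟩ := hc1 a b hab hedge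
    obtain ⟨n1, n2, n3, n4, e1, e2, e3, e4, d1, d2⟩ := hc
    have hcV : c ∈ V1 := h1.1 _ e2 (Finset.mem_insert_of_mem (Finset.mem_singleton_self c))
    have hdV : d ∈ V1 := h1.1 _ e3 (Finset.mem_insert_of_mem (Finset.mem_singleton_self d))
    exact ⟨c, d, n1, n2, n3, n4, inj1 _ e1, inj1 _ e2, inj1 _ e3, inj1 _ e4,
      fun h => d1 (key1 a c (hdl ha1) (hdl hcV) h),
      fun h => d2 (key1 b d (hdl hb1) (hdl hdV) h)⟩
  · -- a ∈ V1, b ∈ V2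
    obtain ⟨c, hcV, hca, hcn⟩ := hnb1 a ha1
    obtain ⟨d, hdV, hdb, hdn⟩ := hnb2 b hb2
    refine ⟨c, d, hab, ?_, ?_, ?_, habm, ?_, ?_, ?_, ?_, ?_⟩
    · exact fun h => hdl hcV (h ▸ hb2)
    · exact fun h => hdl hcV (h ▸ hdV)
    · exact fun h => hdl ha1 (h ▸ hdV) |>.elim
    · rw [Finset.pair_comm]; exact mixed c b hcV hb2
    · exact mixed c d hcV hdV
    · rw [Finset.pair_comm]; exact mixed a d ha1 hdV
    · exact fun h => hcn (key1 a c (hdl ha1) (hdl hcV) h)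
    · exact fun h => hdn (key2 b d (fun hb => hdl hb hb2) (fun hd => hdl hd hdV) h)
  · -- a ∈ V2, b ∈ V1
    obtain ⟨c, hcV, hca, hcn⟩ := hnb2 a ha2
    obtain ⟨d, hdV, hdb, hdn⟩ := hnb1 b hb1
    refine ⟨c, d, hab, ?_, ?_, ?_, habm, ?_, ?_, ?_, ?_, ?_⟩
    · exact fun h => hdl hb1 (h ▸ hcV)
    · exact fun h => hdl hdV (h.symm ▸ hcV)
    · exact fun h => hdl hdV (h ▸ ha2)
    · exact mixed b c hb1 hcV
    · rw [Finset.pair_comm]; exact mixed d c hdV hcV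
    · exact mixed d a hdV ha2
    · exact fun h => hcn (key2 a c (fun ha => hdl ha ha2) (fun hc => hdl hc hcV) h)
    · exact fun h => hdn (key1 b d (hdl hb1) (hdl hdV) h)
  · -- both in V2
    have hedge : ({a, b} : Finset α) ∈ Φ2 :=
      key2 a b (fun h => hdl h ha2) (fun h => hdl h hb2) habm
    obtain ⟨c, d, hc⟩ := hc2 a b hab hedge
    obtain ⟨n1, n2, n3, n4, e1, e2, e3, e4, d1, d2⟩ := hc
    have hcV : c ∈ V2 := h2.1 _ e2 (Finset.mem_insert_of_mem (Finset.mem_singleton_self c))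
    have hdV : d ∈ V2 := h2.1 _ e3 (Finset.mem_insert_of_mem (Finset.mem_singleton_self d))
    exact ⟨c, d, n1, n2, n3, n4, inj2 _ e1, inj2 _ e2, inj2 _ e3, inj2 _ e4,
      fun h => d1 (key2 a c (fun h' => hdl h' ha2) (fun h' => hdl h' hcV) h),
      fun h => d2 (key2 b d (fun h' => hdl h' hb2) (fun h' => hdl h' hdV) h)⟩

end JoinComplex
end

section
/- For every k ≥ 1, the k-fold join Δ_{12,33}^{*k} of k disjoint copies of Δ_{12,33} (the complex on V × {1,…,k} whose faces are the unions F_1 ∪ … ∪ F_k where each F_j is a face of the j-th copy of Δ_{12,33}) is a flag simplicial complex, is not a suspension, and every 2-element face of it is contained in an induced 4-cycle of its graph (so it has no contractible edge). -/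
namespace Delta

/-- Vertex set of the `k`-fold join of `Δ_{12,33}`: `k` disjoint copies of `V`. -/
abbrev Vk (k : ℕ) : Type := V × Fin k

/-- `F` is a face of the `k`-fold join `Δ_{12,33}^{*k}`: the part of `F` in
each copy of `V` is a face of `Δ_{12,33}` (so `F = F_1 ∪ ⋯ ∪ F_k` with each
`F_j` a face of the `j`-th copy). -/
def IsFaceK (k : ℕ) (F : Finset (Vk k)) : Prop :=
  ∀ j : Fin k, IsFace ((F.filter (fun p => p.2 = j)).image Prod.fst)


-- ------------------------------------------------------------------
-- Auxiliary finite facts, via bitmask encodings (fast to `decide`)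
-- ------------------------------------------------------------------

/-- Neighborhood bitmasks (each vertex is declared adjacent to itself). -/
def nbrMask : List ℕ := [2807, 2991, 2911, 1982, 1917, 1787, 3573, 3563, 3550, 575, 1528, 2503]

def adjB (a b : V) : Bool := (nbrMask.getD a.val 0).testBit b.val

/-- Bitmasks of the 33 facets, paired with the facets themselves. -/
def facPairs : List (ℕ × Finset V) :=
  ([113, 1136, 1080, 1304, 1360, 340, 85, 2117, 284, 1472, 540, 526, 2372, 2496,
    2241, 225, 1248, 1192, 533, 519, 561, 270, 2310, 1416, 394, 170, 568, 554,
    547, 163, 2055, 2179, 2434]).zip facetList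

def inMask (m : ℕ) (a : V) : Bool := m.testBit a.val

def face3B (a b c : V) : Bool := facPairs.any fun p => inMask p.1 a && inMask p.1 b && inMask p.1 c

def face4B (a b c d : V) : Bool :=
  facPairs.any fun p => inMask p.1 a && inMask p.1 b && inMask p.1 c && inMask p.1 d

set_option maxHeartbeats 1000000 in
lemma bridge : ∀ p ∈ facPairs, p.2 ∈ facets ∧
    ∀ x : V, inMask p.1 x = true → x ∈ p.2 := by decide

lemma face3B_isFace {a b c : V} (h : face3B a b c = true) : IsFace {a, b, c} := by
  obtain ⟨p, hp, hb⟩ := List.any_eq_true.mp h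
  obtain ⟨hpf, hbr⟩ := bridge p hp
  rw [Bool.and_eq_true, Bool.and_eq_true] at hb
  refine ⟨p.2, hpf, ?_⟩
  intro x hx
  simp only [Finset.mem_insert, Finset.mem_singleton] at hx
  rcases hx with rfl | rfl | rfl
  · exact hbr x hb.1.1
  · exact hbr x hb.1.2
  · exact hbr x hb.2

lemma face4B_isFace {a b c d : V} (h : face4B a b c d = true) : IsFace {a, b, c, d} := by
  obtain ⟨p, hp, hb⟩ := List.any_eq_true.mp h
  obtain ⟨hpf, hbr⟩ := bridge p hp
  rw [Bool.and_eq_true, Bool.and_eq_true, Bool.and_eq_true] at hb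
  refine ⟨p.2, hpf, ?_⟩
  intro x hx
  simp only [Finset.mem_insert, Finset.mem_singleton] at hx
  rcases hx with rfl | rfl | rfl | rfl
  · exact hbr x hb.1.1.1
  · exact hbr x hb.1.1.2
  · exact hbr x hb.1.2
  · exact hbr x hb.2

set_option maxHeartbeats 1000000 in
lemma adj_iff : ∀ a b : V, adjB a b = true ↔ IsFace {a, b} := by decide

lemma adj_self : ∀ a : V, adjB a a = true := by decide

lemma face_empty : IsFace (∅ : Finset V) := by decide

lemma face_single : ∀ a : V, IsFace {a} := by decide

set_option maxHeartbeats 1000000 in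
lemma f3 : ∀ a b : V, adjB a b = true → ∀ c : V, adjB a c = true → adjB b c = true →
    face3B a b c = true := by decide

set_option maxHeartbeats 1000000 in
lemma f4 : ∀ a b : V, adjB a b = true → ∀ c : V, adjB a c = true → adjB b c = true →
    ∀ d : V, adjB a d = true → adjB b d = true → adjB c d = true →
    face4B a b c d = true := by decide

set_option maxHeartbeats 4000000 in
lemma f5 : ∀ a b : V, a ≠ b → adjB a b = true →
    ∀ c : V, c ≠ a → c ≠ b → adjB a c = true → adjB b c = true →
    ∀ d : V, d ≠ a → d ≠ b → d ≠ c → adjB a d = true → adjB b d = true → adjB c d = true →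
    ∀ e : V, e ≠ a → e ≠ b → e ≠ c → e ≠ d → adjB a e = true → adjB b e = true →
      adjB c e = true → adjB d e = true → False := by decide

lemma f_nonnbr : ∀ a b : V, ∃ c : V, c ≠ a ∧ c ≠ b ∧ adjB a c = false := by decide

set_option maxHeartbeats 1000000 in
lemma f_cyc : ∀ u w : V, u ≠ w → adjB u w = true → ∃ c d : V,
    w ≠ c ∧ c ≠ d ∧ d ≠ u ∧ adjB w c = true ∧ adjB c d = true ∧ adjB d u = true ∧
    adjB u c = false ∧ adjB w d = false := by decide

lemma not_face_of_adjB_false {a b : V} (h : adjB a b = false) : ¬ IsFace {a, b} :=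
  fun hf => by rw [(adj_iff a b).mpr hf] at h; exact Bool.noConfusion h

/-- The complex is flag. -/
lemma flagDelta (S : Finset V)
    (h : ∀ a ∈ S, ∀ b ∈ S, a ≠ b → IsFace {a, b}) : IsFace S := by
  have hadj : ∀ a ∈ S, ∀ b ∈ S, adjB a b = true := by
    intro a ha b hb
    by_cases hab : a = b
    · subst hab; exact adj_self a
    · exact (adj_iff a b).mpr (h a ha b hb hab)
  by_cases h5 : 5 ≤ S.card
  · exfalso
    obtain ⟨T, hTS, hT⟩ := Finset.exists_subset_card_eq h5
    obtain ⟨a, t, hat, rfl, ht4⟩ := Finset.card_eq_succ.mp hT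
    obtain ⟨b, t2, hbt, rfl, ht3⟩ := Finset.card_eq_succ.mp ht4
    obtain ⟨c, d, e, hcd, hce, hde, rfl⟩ := Finset.card_eq_three.mp ht3
    simp only [Finset.mem_insert, Finset.mem_singleton, not_or] at hat hbt
    obtain ⟨hab, hac, had, hae⟩ := hat
    obtain ⟨hbc, hbd, hbe⟩ := hbt
    have mem : ∀ x ∈ (insert a (insert b ({c, d, e} : Finset V))), x ∈ S :=
      fun x hx => hTS hx
    have ma : a ∈ S := mem a (by simp)
    have mb : b ∈ S := mem b (by simp)
    have mc : c ∈ S := mem c (by simp)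
    have md : d ∈ S := mem d (by simp)
    have me : e ∈ S := mem e (by simp)
    exact f5 a b hab (hadj a ma b mb)
      c (Ne.symm hac) (Ne.symm hbc) (hadj a ma c mc) (hadj b mb c mc)
      d (Ne.symm had) (Ne.symm hbd) (Ne.symm hcd) (hadj a ma d md) (hadj b mb d md)
        (hadj c mc d md)
      e (Ne.symm hae) (Ne.symm hbe) (Ne.symm hce) (Ne.symm hde) (hadj a ma e me)
        (hadj b mb e me) (hadj c mc e me) (hadj d md e me)
  · have hc : S.card = 0 ∨ S.card = 1 ∨ S.card = 2 ∨ S.card = 3 ∨ S.card = 4 := by omega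
    rcases hc with h0 | h1 | h2 | h3 | h4
    · rw [Finset.card_eq_zero.mp h0]; exact face_empty
    · obtain ⟨a, rfl⟩ := Finset.card_eq_one.mp h1; exact face_single a
    · obtain ⟨a, b, hab, rfl⟩ := Finset.card_eq_two.mp h2
      exact h a (by simp) b (by simp) hab
    · obtain ⟨a, b, c, hab, hac, hbc, rfl⟩ := Finset.card_eq_three.mp h3
      exact face3B_isFace (f3 a b (hadj a (by simp) b (by simp))
        c (hadj a (by simp) c (by simp)) (hadj b (by simp) c (by simp)))
    · obtain ⟨a, t, hat, rfl, ht3⟩ := Finset.card_eq_succ.mp h4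
      obtain ⟨b, c, d, hbc, hbd, hcd, rfl⟩ := Finset.card_eq_three.mp ht3
      exact face4B_isFace (f4 a b (hadj a (by simp) b (by simp))
        c (hadj a (by simp) c (by simp)) (hadj b (by simp) c (by simp))
        d (hadj a (by simp) d (by simp)) (hadj b (by simp) d (by simp))
        (hadj c (by simp) d (by simp)))

-- ------------------------------------------------------------------
-- Projections to copies, and faces of the join
-- ------------------------------------------------------------------

lemma mem_proj {k : ℕ} (j : Fin k) (F : Finset (Vk k)) (x : V) :
    x ∈ (F.filter (fun p => p.2 = j)).image Prod.fst ↔ (x, j) ∈ F := by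
  simp only [Finset.mem_image, Finset.mem_filter]
  constructor
  · rintro ⟨⟨y, j'⟩, ⟨hF, h2⟩, h1⟩
    dsimp at h2 h1
    subst h2; subst h1; exact hF
  · intro hF; exact ⟨(x, j), ⟨hF, rfl⟩, rfl⟩

lemma proj_eq {k : ℕ} (j : Fin k) (F : Finset (Vk k)) (T : Finset V)
    (h : ∀ x : V, (x, j) ∈ F ↔ x ∈ T) :
    (F.filter (fun p => p.2 = j)).image Prod.fst = T :=
  Finset.ext fun x => (mem_proj j F x).trans (h x)

lemma faceK_pair_same {k : ℕ} (i : Fin k) (u w : V) :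
    IsFaceK k {(u, i), (w, i)} ↔ IsFace {u, w} := by
  constructor
  · intro h
    have hi := h i
    rwa [proj_eq i _ ({u, w} : Finset V) (by intro x; simp [Prod.ext_iff])] at hi
  · intro h j
    by_cases hji : j = i
    · subst hji
      rw [proj_eq j _ ({u, w} : Finset V) (by intro x; simp [Prod.ext_iff])]
      exact h
    · rw [proj_eq j _ (∅ : Finset V) (by intro x; simp [Prod.ext_iff, hji])]
      exact face_empty

lemma faceK_single {k : ℕ} (i : Fin k) (u : V) : IsFaceK k {(u, i)} := by
  intro j
  by_cases hji : j = i
  · subst hji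
    rw [proj_eq j _ ({u} : Finset V) (by intro x; simp [Prod.ext_iff])]
    exact face_single u
  · rw [proj_eq j _ (∅ : Finset V) (by intro x; simp [Prod.ext_iff, hji])]
    exact face_empty

lemma faceK_pair_diff {k : ℕ} (i j : Fin k) (hij : i ≠ j) (u w : V) :
    IsFaceK k {(u, i), (w, j)} := by
  intro l
  by_cases hli : l = i
  · subst hli
    rw [proj_eq l _ ({u} : Finset V)
      (by intro x; simp [Prod.ext_iff]; intro h; exact fun hl => absurd hl hij)]
    exact face_single u
  · by_cases hlj : l = j
    · subst hlj
      rw [proj_eq l _ ({w} : Finset V)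
        (by intro x; simp [Prod.ext_iff, hli])]
      exact face_single w
    · rw [proj_eq l _ (∅ : Finset V) (by intro x; simp [Prod.ext_iff, hli, hlj])]
      exact face_empty

/-- for every `k ≥ 1`, the `k`-fold join of `Δ_{12,33}` is a flag
simplicial complex, is not a suspension, and every edge of it lies in an
induced 4-cycle of its graph (so it has no contractible edge). -/
theorem kfold_join_flag_not_suspension_no_contractible_edge (k : ℕ) (hk : 1 ≤ k) :
    (∀ S : Finset (Vk k),
      (∀ a ∈ S, ∀ b ∈ S, a ≠ b → IsFaceK k {a, b}) → IsFaceK k S) ∧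
    (¬ ∃ v w : Vk k, v ≠ w ∧ ¬ IsFaceK k {v, w} ∧
      (∀ F : Finset (Vk k), IsFaceK k F ↔
        ∃ A ∈ ({∅, {v}, {w}} : Set (Finset (Vk k))),
          ∃ G : Finset (Vk k), IsFaceK k G ∧ v ∉ G ∧ w ∉ G ∧ F = A ∪ G)) ∧
    (∀ a b : Vk k, a ≠ b → IsFaceK k {a, b} →
      ∃ c d : Vk k,
        a ≠ b ∧ b ≠ c ∧ c ≠ d ∧ d ≠ a ∧
        IsFaceK k {a, b} ∧ IsFaceK k {b, c} ∧ IsFaceK k {c, d} ∧ IsFaceK k {d, a} ∧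
        ¬ IsFaceK k {a, c} ∧ ¬ IsFaceK k {b, d}) := by
  refine ⟨?_, ?_, ?_⟩
  · -- flag
    intro S hS j
    apply flagDelta
    intro a ha b hb hab
    rw [mem_proj] at ha hb
    have hne : ((a, j) : Vk k) ≠ (b, j) := fun h => hab (congrArg Prod.fst h)
    exact (faceK_pair_same j a b).mp (hS (a, j) ha (b, j) hb hne)
  · -- not a suspension
    rintro ⟨⟨a, i⟩, ⟨b, j⟩, hvw, hnf, hiff⟩
    by_cases hij : i = j
    · subst hij
      obtain ⟨c, hca, hcb, hc⟩ := f_nonnbr a b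
      have hF : IsFaceK k {((a, i) : Vk k), (c, i)} := by
        apply (hiff {(a, i), (c, i)}).mpr
        refine ⟨{(a, i)}, by simp, {(c, i)}, faceK_single i c, ?_, ?_, ?_⟩
        · simp only [Finset.mem_singleton]
          exact fun h => hca (congrArg Prod.fst h).symm
        · simp only [Finset.mem_singleton]
          exact fun h => hcb (congrArg Prod.fst h).symm
        · ext p; simp
      exact not_face_of_adjB_false hc ((faceK_pair_same i a c).mp hF)
    · exact hnf (faceK_pair_diff i j hij a b)
  · -- every edge lies in an induced 4-cycle
    rintro ⟨u, i⟩ ⟨w, j⟩ hab hf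
    by_cases hij : i = j
    · subst hij
      have huw : u ≠ w := fun h => hab (by rw [h])
      have hadj : adjB u w = true := (adj_iff u w).mpr ((faceK_pair_same i u w).mp hf)
      obtain ⟨c, d, hwc, hcd, hdu, hwc', hcd', hdu', huc, hwd⟩ := f_cyc u w huw hadj
      refine ⟨(c, i), (d, i), hab,
        (fun h => hwc (congrArg Prod.fst h)),
        (fun h => hcd (congrArg Prod.fst h)),
        (fun h => hdu (congrArg Prod.fst h)), hf,
        (faceK_pair_same i w c).mpr ((adj_iff w c).mp hwc'),
        (faceK_pair_same i c d).mpr ((adj_iff c d).mp hcd'),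
        (faceK_pair_same i d u).mpr ((adj_iff d u).mp hdu'),
        ?_, ?_⟩
      · exact fun h => not_face_of_adjB_false huc ((faceK_pair_same i u c).mp h)
      · exact fun h => not_face_of_adjB_false hwd ((faceK_pair_same i w d).mp h)
    · obtain ⟨c, hcu, _, hc⟩ := f_nonnbr u u
      obtain ⟨d, hdw, _, hd⟩ := f_nonnbr w w
      refine ⟨(c, i), (d, j), hab,
        (fun h => hij ((congrArg Prod.snd h).symm)),
        (fun h => hij (congrArg Prod.snd h)),
        (fun h => hij ((congrArg Prod.snd h).symm)), hf,
        faceK_pair_diff j i (Ne.symm hij) w c,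
        faceK_pair_diff i j hij c d,
        faceK_pair_diff j i (Ne.symm hij) d u,
        ?_, ?_⟩
      · exact fun h => not_face_of_adjB_false hc ((faceK_pair_same i u c).mp h)
      · exact fun h => not_face_of_adjB_false hd ((faceK_pair_same j w d).mp h)


end Delta
end
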